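/- arXiv:1606.04194 — 2 statements merged into one kernel-verified Lean document; each statement's English description precedes it below -/
import Mathlib

section
/- For every ordinal μ < I and every ordinal α, Ω_μ < ψ_{Ω_{μ+1}} α < Ω_{μ+1}. -/
open Ordinal Set

noncomputable section

/-- A cardinal is weakly inaccessible: uncountable, regular, and a limit cardinal. -/
def WeaklyInaccessible (c : Cardinal) : Prop :=
  Cardinal.aleph0 < c ∧ c.IsRegular ∧ ∀ x < c, Order.succ x < c

/-- `I` is (the initial ordinal of) the least weakly inaccessible cardinal. -/
def I : Ordinal := (sInf {c : Cardinal | WeaklyInaccessible c}).ord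

/-- `Om α` is `Ω_α`: `0` for `α = 0` and the initial ordinal of `ℵ_α` otherwise. -/
def Om (α : Ordinal) : Ordinal := if α = 0 then 0 else (Cardinal.aleph α).ord

/-- `R = {Ω_{μ+1} : μ < I} ∪ {I}`. -/
def R : Set Ordinal := {o | (∃ μ < I, o = Om (μ + 1)) ∨ o = I}

/-- Given the family of hulls at earlier stages, the collapse `ψ_σ`. -/
def psiOf (F : Set Ordinal → Set Ordinal) (σ : Ordinal) : Ordinal :=
  sInf ({β | β < σ ∧ σ ∈ F (Set.Iio β) ∧ F (Set.Iio β) ∩ Set.Iio σ ⊆ Set.Iio β} ∪ {σ})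

instance : WellFoundedRelation Ordinal := ⟨(· < ·), Ordinal.lt_wf⟩

/-- `H α X` is the least set of ordinals containing `X ∪ {0, I}` and closed under
ordinal addition, `β ↦ ω^β`, `β ↦ Ω_β`, and `(σ, β) ↦ ψ_σ β` for `σ ∈ R` and `β < α`. -/
def H (α : Ordinal) (X : Set Ordinal) : Set Ordinal :=
  ⋂₀ {Y : Set Ordinal | X ∪ {0, I} ⊆ Y ∧
      (∀ γ ∈ Y, ∀ δ ∈ Y, γ + δ ∈ Y) ∧
      (∀ γ ∈ Y, Ordinal.omega0 ^ γ ∈ Y) ∧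
      (∀ γ ∈ Y, Om γ ∈ Y) ∧
      (∀ σ ∈ R, ∀ β ∈ Y, β < α → σ ∈ Y → psiOf (H β) σ ∈ Y)}
termination_by α
decreasing_by assumption

/-- The collapsing function `ψ_σ α`. -/
def psi (σ α : Ordinal) : Ordinal := psiOf (H α) σ

/-- The relation `δ₀ ≪ δ₁ {η}`. -/
def llr (η δ₀ δ₁ : Ordinal) : Prop :=
  δ₀ < δ₁ ∧ ∀ σ ∈ R, ∀ α : Ordinal,
    δ₁ ∈ H α (Set.Iio (psi σ α)) → η ∈ H α (Set.Iio (psi σ α)) → δ₀ ∈ H α (Set.Iio (psi σ α))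

/-!
Let `σ = Ω_{μ+1}`, the initial ordinal of the regular cardinal `ℵ_{μ+1}`.

Upper bound: every hull `H_α(β)` has at most `|β| + ℵ₀` elements, so for `β < σ` the ordinal
`b(β) = sup (H_α(β) ∩ σ) + 1` is still below `σ`. Iterating `b` from `μ + 2` and taking the
supremum (below `σ`, as `cof σ > ω`) gives a `β < σ` with `σ ∈ H_α(β)` and
`H_α(β) ∩ σ ⊆ β`, whence `ψ_σ α ≤ β`.

Lower bound: `σ` is additively principal, closed under `ω^·`, differs from `0` and from `I`
(as `μ < I`), and is no value `ψ_{σ'} β` with `σ' ≠ σ`. So `σ` can only enter a hull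
`H_α(X)` with `σ ∉ X` as `Ω_{μ+1}` with `μ + 1` already in the hull. For a candidate `β < σ`
this puts `μ + 1`, hence `μ` and `Ω_μ`, below `β`.
-/

open Cardinal

theorem Om_succ (μ : Ordinal) : Om (μ + 1) = (ℵ_ (μ + 1)).ord := by
  simp [Om]

theorem Om_strictMono : StrictMono Om := by
  intro a b hab
  rw [Om, Om, if_neg (pos_of_gt hab).ne']
  split_ifs
  · exact ord_aleph b ▸ omega_pos b
  · exact ord_lt_ord.2 (aleph_lt_aleph.2 hab)

theorem lt_Om_succ (μ : Ordinal) : μ + 1 < Om (μ + 1) := by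
  rw [Om_succ, ord_aleph]
  exact (isSuccLimit_omega _).add_one_lt
    ((le_omega_self μ).trans_lt (omega_lt_omega.2 (lt_add_one μ)))

theorem WeaklyInaccessible.aleph_lt {c : Cardinal} (hc : WeaklyInaccessible c) {ξ : Ordinal}
    (hξ : ξ < c.ord) : ℵ_ ξ < c := by
  induction ξ using Ordinal.limitRecOn with
  | zero => simpa using hc.1
  | add_one ν ih => rw [← succ_aleph]; exact hc.2.2 _ (ih ((lt_add_one ν).trans hξ))
  | limit ξ hlim ih =>
    rw [aleph_limit hlim]
    refine lift_iSup_lt_of_lt_cof_ord ?_ fun a => ih a a.2 (a.2.trans hξ)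
    rwa [Cardinal.mk_Iio_ordinal, Cardinal.lift_lift, ← lift_ord, ← lift_cof, hc.2.1.cof_ord,
      Cardinal.lift_lt, ← lt_ord]

theorem Om_succ_lt_I {μ : Ordinal} (hμ : μ < I) : Om (μ + 1) < I := by
  have hne : {c | WeaklyInaccessible c}.Nonempty := by
    by_contra h
    simp [I, not_nonempty_iff_eq_empty.1 h] at hμ
  have hc : WeaklyInaccessible (sInf {c | WeaklyInaccessible c}) := csInf_mem hne
  rw [Om_succ, I, ord_lt_ord, ← succ_aleph]
  exact hc.2.2 _ (hc.aleph_lt hμ)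

def IsPsiCandidate (F : Set Ordinal → Set Ordinal) (σ β : Ordinal) : Prop :=
  β < σ ∧ σ ∈ F (Iio β) ∧ F (Iio β) ∩ Iio σ ⊆ Iio β

theorem psiOf_isPsiCandidate_or_eq (F : Set Ordinal → Set Ordinal) (σ : Ordinal) :
    IsPsiCandidate F σ (psiOf F σ) ∨ psiOf F σ = σ :=
  csInf_mem (s := {β | IsPsiCandidate F σ β} ∪ {σ}) ⟨σ, Or.inr rfl⟩

theorem psiOf_le {F : Set Ordinal → Set Ordinal} {σ β : Ordinal} (h : IsPsiCandidate F σ β) :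
    psiOf F σ ≤ β :=
  csInf_le' (Or.inl h)

def hullStep (α : Ordinal) (Y : Set Ordinal) : Set Ordinal :=
  image2 (· + ·) Y Y ∪ (ω ^ ·) '' Y ∪ Om '' Y ∪
    image2 (fun σ β => psiOf (H β) σ) (R ∩ Y) (Y ∩ Iio α)

theorem hullStep_mono (α : Ordinal) : Monotone (hullStep α) := fun _ _ h =>
  union_subset_union
    (union_subset_union (union_subset_union (image2_subset h h) (image_mono h)) (image_mono h))
    (image2_subset (inter_subset_inter_right _ h) (inter_subset_inter_left _ h))

def hullOp (α : Ordinal) (X : Set Ordinal) : Set Ordinal →o Set Ordinal where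
  toFun Y := X ∪ {0, I} ∪ hullStep α Y
  monotone' _ _ h := union_subset_union_right _ (hullStep_mono α h)

theorem H_eq_lfp (α : Ordinal) (X : Set Ordinal) : H α X = OrderHom.lfp (hullOp α X) := by
  rw [H]
  show _ = ⋂₀ {Y | hullOp α X Y ⊆ Y}
  congr 1
  ext Y
  simp only [hullOp, hullStep, OrderHom.coe_mk, union_subset_iff, image2_subset_iff,
    image_subset_iff, mem_ofPred_eq]
  exact ⟨fun ⟨hX, hadd, hopow, hOm, hpsi⟩ => ⟨hX, ⟨⟨hadd, hopow⟩, hOm⟩,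
      fun σ hσ β hβ => hpsi σ hσ.1 β hβ.1 hβ.2 hσ.2⟩,
    fun ⟨hX, ⟨⟨hadd, hopow⟩, hOm⟩, hpsi⟩ => ⟨hX, hadd, hopow, hOm,
      fun σ hσR β hβ hβα hσ => hpsi σ ⟨hσR, hσ⟩ β ⟨hβ, hβα⟩⟩⟩

section Hull

variable {α : Ordinal} {X : Set Ordinal}

theorem H_subset_of_hullOp_subset {Y : Set Ordinal} (h : hullOp α X Y ⊆ Y) : H α X ⊆ Y :=
  H_eq_lfp α X ▸ OrderHom.lfp_le _ h

theorem hullOp_H : hullOp α X (H α X) = H α X :=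
  H_eq_lfp α X ▸ OrderHom.map_lfp _

theorem subset_H : X ⊆ H α X :=
  fun _ hx => hullOp_H.subset (Or.inl (Or.inl hx))

theorem pair_subset_H : {0, I} ⊆ H α X :=
  fun _ hx => hullOp_H.subset (Or.inl (Or.inr hx))

theorem hullStep_H_subset : hullStep α (H α X) ⊆ H α X :=
  fun _ hx => hullOp_H.subset (Or.inr hx)

theorem Om_mem_H {γ : Ordinal} (h : γ ∈ H α X) : Om γ ∈ H α X :=
  hullStep_H_subset (Or.inl (Or.inr (mem_image_of_mem Om h)))

theorem H_mono {X' : Set Ordinal} (h : X ⊆ X') : H α X ⊆ H α X' :=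
  H_subset_of_hullOp_subset (union_subset (union_subset (h.trans subset_H) pair_subset_H)
    hullStep_H_subset)

theorem hullStep_iUnion_subset {ι : Type*} {Y : ι → Set Ordinal} (hY : Directed (· ⊆ ·) Y) :
    hullStep α (⋃ i, Y i) ⊆ ⋃ i, hullStep α (Y i) := by
  have common {a b : Ordinal} (ha : a ∈ ⋃ i, Y i) (hb : b ∈ ⋃ i, Y i) :
      ∃ k, a ∈ Y k ∧ b ∈ Y k := by
    obtain ⟨i, hi⟩ := mem_iUnion.1 ha
    obtain ⟨j, hj⟩ := mem_iUnion.1 hb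
    obtain ⟨k, hik, hjk⟩ := hY i j
    exact ⟨k, hik hi, hjk hj⟩
  rintro x (((⟨γ, hγ, δ, hδ, rfl⟩ | ⟨γ, hγ, rfl⟩) | ⟨γ, hγ, rfl⟩) |
    ⟨σ, ⟨hσR, hσ⟩, β, ⟨hβ, hβα⟩, rfl⟩) <;> rw [mem_iUnion]
  · obtain ⟨k, hγk, hδk⟩ := common hγ hδ
    exact ⟨k, Or.inl (Or.inl (Or.inl (mem_image2_of_mem hγk hδk)))⟩
  · obtain ⟨k, hk⟩ := mem_iUnion.1 hγ
    exact ⟨k, Or.inl (Or.inl (Or.inr (mem_image_of_mem _ hk)))⟩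
  · obtain ⟨k, hk⟩ := mem_iUnion.1 hγ
    exact ⟨k, Or.inl (Or.inr (mem_image_of_mem _ hk))⟩
  · obtain ⟨k, hσk, hβk⟩ := common hσ hβ
    exact ⟨k, Or.inr (mem_image2_of_mem ⟨hσR, hσk⟩ ⟨hβk, hβα⟩)⟩

theorem H_iUnion_subset {ι : Type*} [Nonempty ι] {X : ι → Set Ordinal}
    (hX : Directed (· ⊆ ·) X) : H α (⋃ i, X i) ⊆ ⋃ i, H α (X i) := by
  refine H_subset_of_hullOp_subset (union_subset (union_subset ?_ ?_) ?_)
  · exact iUnion_mono fun i => subset_H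
  · exact pair_subset_H.trans (subset_iUnion (fun i => H α (X i)) (Classical.arbitrary ι))
  · have hHX : Directed (· ⊆ ·) fun i => H α (X i) := hX.mono_comp _ fun _ _ => H_mono
    exact (hullStep_iUnion_subset hHX).trans (iUnion_mono fun i => hullStep_H_subset)

theorem H_subset_iUnion_iterate : H α X ⊆ ⋃ n : ℕ, (hullOp α X)^[n] ∅ := by
  have hmono : Monotone fun n : ℕ => (hullOp α X)^[n] ∅ :=
    (hullOp α X).monotone.monotone_iterate_of_le_map (empty_subset _)
  refine H_subset_of_hullOp_subset (union_subset (subset_iUnion_of_subset 1 subset_union_left) ?_)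
  refine (hullStep_iUnion_subset hmono.directed_le).trans (iUnion_subset fun n => ?_)
  refine subset_iUnion_of_subset (n + 1) ?_
  rw [Function.iterate_succ_apply']
  exact subset_union_right

theorem mk_hullOp_le {κ : Cardinal} (hκ : ℵ₀ ≤ κ) {Y : Set Ordinal} (hX : #X ≤ κ)
    (hY : #Y ≤ κ) : #(hullOp α X Y) ≤ κ := by
  have union_le {A B : Set Ordinal} (hA : #A ≤ κ) (hB : #B ≤ κ) :
      #(A ∪ B : Set Ordinal) ≤ κ :=
    (mk_union_le A B).trans ((add_le_add hA hB).trans (add_eq_self hκ).le)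
  have image2_le {A B : Set Ordinal} (f : Ordinal → Ordinal → Ordinal) (hA : #A ≤ κ)
      (hB : #B ≤ κ) : #(image2 f A B) ≤ κ :=
    mk_image2_le.trans ((mul_le_mul' hA hB).trans (mul_eq_self hκ).le)
  have hpair : #({0, I} : Set Ordinal) ≤ κ := (toFinite _).lt_aleph0.le.trans hκ
  have hRY : #(R ∩ Y : Set Ordinal) ≤ κ := (mk_le_mk_of_subset inter_subset_right).trans hY
  have hYα : #(Y ∩ Iio α : Set Ordinal) ≤ κ :=
    (mk_le_mk_of_subset inter_subset_left).trans hY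
  exact union_le (union_le hX hpair) (union_le (union_le (union_le (image2_le _ hY hY)
    (mk_image_le.trans hY)) (mk_image_le.trans hY)) (image2_le _ hRY hYα))

theorem mk_H_le : #(H α X) ≤ #X + ℵ₀ := by
  have hκ : ℵ₀ ≤ #X + ℵ₀ := le_add_self
  have hstage (n : ℕ) : #((hullOp α X)^[n] ∅) ≤ #X + ℵ₀ := by
    induction n with
    | zero => simp
    | succ n ih =>
      rw [Function.iterate_succ_apply']
      exact mk_hullOp_le hκ le_self_add ih
  refine (mk_le_mk_of_subset H_subset_iUnion_iterate).trans ?_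
  have := mk_iUnion_le_lift fun n : ℕ => (hullOp α X)^[n] ∅
  simp only [Cardinal.lift_uzero, mk_nat, lift_aleph0] at this
  exact this.trans ((mul_le_mul' hκ (ciSup_le' hstage)).trans (mul_eq_self hκ).le)

end Hull

section UpperBound

variable {α σ : Ordinal}

def hullBound (α σ b : Ordinal) : Ordinal :=
  Order.succ (sSup (H α (Iio b) ∩ Iio σ))

theorem lt_hullBound {b x : Ordinal} (hx : x ∈ H α (Iio b)) (hxσ : x < σ) :
    x < hullBound α σ b :=
  Order.lt_succ_iff.2 (le_csSup ⟨σ, fun _ hy => hy.2.le⟩ ⟨hx, hxσ⟩)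

theorem le_hullBound {b : Ordinal} (hb : b ≤ σ) : b ≤ hullBound α σ b :=
  le_of_forall_lt fun _ hx => lt_hullBound (subset_H hx) (hx.trans_le hb)

theorem hullBound_mono : Monotone (hullBound α σ) := fun _ _ h =>
  Order.succ_le_succ (csSup_le_csSup' ⟨σ, fun _ hy => hy.2.le⟩
    (inter_subset_inter_left _ (H_mono (Iio_subset_Iio h))))

theorem hullBound_lt {κ : Cardinal} (hκ : κ.IsRegular) (hκ₀ : ℵ₀ < κ) {b : Ordinal}
    (hb : b < κ.ord) : hullBound α κ.ord b < κ.ord := by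
  refine (isSuccLimit_ord hκ₀.le).succ_lt (sSup_lt_of_lt_cof ?_ fun _ hx => hx.2)
  rw [← Ordinal.lift_cof, hκ.cof_ord]
  refine (mk_le_mk_of_subset inter_subset_left).trans_lt (mk_H_le.trans_lt ?_)
  rw [Cardinal.mk_Iio_ordinal]
  exact add_lt_of_lt (by simpa using hκ₀.le) (Cardinal.lift_lt.2 (lt_ord.1 hb))
    (by simpa using hκ₀)

theorem psi_lt_of_mem_H {κ : Cardinal} (hκ : κ.IsRegular) (hκ₀ : ℵ₀ < κ) {β : Ordinal}
    (hβ : β < κ.ord) (hmem : κ.ord ∈ H α (Iio β)) : psi κ.ord α < κ.ord := by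
  set f := hullBound α κ.ord
  have hiter : Monotone fun n => f^[n] β :=
    hullBound_mono.monotone_iterate_of_le_map (le_hullBound hβ.le)
  have hfix : nfp f β < κ.ord :=
    nfp_lt_ord (by rwa [hκ.cof_ord]) (fun _ => hullBound_lt hκ hκ₀) hβ
  have hIio : Iio (nfp f β) = ⋃ n, Iio (f^[n] β) := by
    ext x
    simp [lt_nfp_iff]
  refine (psiOf_le ⟨hfix, H_mono (Iio_subset_Iio (le_nfp f β)) hmem, ?_⟩).trans_lt hfix
  rintro x ⟨hx, hxσ⟩
  rw [hIio] at hx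
  have hdir : Monotone fun n => Iio (f^[n] β) := fun _ _ h => Iio_subset_Iio (hiter h)
  obtain ⟨n, hn⟩ := mem_iUnion.1 (H_iUnion_subset hdir.directed_le hx)
  have := iterate_le_nfp f β (n + 1)
  rw [Function.iterate_succ_apply'] at this
  exact (lt_hullBound hn hxσ).trans_le this

end UpperBound

section LowerBound

variable {α μ : Ordinal}

theorem psiOf_H_ne_Om_succ {σ : Ordinal} (hσ : σ ≠ Om (μ + 1)) :
    psiOf (H α) σ ≠ Om (μ + 1) := by
  rcases psiOf_isPsiCandidate_or_eq (H α) σ with ⟨hlt, -, hsub⟩ | heq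
  · intro he
    rw [he] at hlt hsub
    have hmem : Om (μ + 1) ∈ H α (Iio (Om (μ + 1))) := Om_mem_H (subset_H (lt_Om_succ μ))
    exact lt_irrefl _ (mem_Iio.1 (hsub ⟨hmem, hlt⟩))
  · rwa [heq]

theorem succ_mem_H_of_Om_succ_mem_H {X : Set Ordinal} (hI : Om (μ + 1) < I)
    (hX : Om (μ + 1) ∉ X) (h : Om (μ + 1) ∈ H α X) : μ + 1 ∈ H α X := by
  set σ := Om (μ + 1) with hσ
  by_contra hμ
  suffices hullOp α X (H α X \ {σ}) ⊆ H α X \ {σ} from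
    (H_subset_of_hullOp_subset this h).2 rfl
  have hκ : ℵ₀ ≤ ℵ_ (μ + 1) := aleph0_le_aleph _
  have hadd := isPrincipal_add_ord hκ
  have hopow := isPrincipal_opow_ord hκ
  rw [← Om_succ, ← hσ] at hadd hopow
  intro x hx
  refine ⟨hullOp_H.subset ((hullOp α X).monotone sdiff_subset hx), fun (hxσ : x = σ) => ?_⟩
  subst hxσ
  rcases hx with (hX' | h0 | hI') |
    (((⟨γ, hγ, δ, hδ, he⟩ | ⟨γ, hγ, he⟩) | ⟨γ, hγ, he⟩) |
    ⟨σ', ⟨-, hσ'⟩, β, -, he⟩)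
  · exact hX hX'
  · exact (pos_of_gt (lt_Om_succ μ)).ne' h0
  · exact hI.ne hI'
  · have hγσ : γ < σ := (le_self_add.trans_eq he).lt_of_ne hγ.2
    have hδσ : δ < σ := (le_add_self.trans_eq he).lt_of_ne hδ.2
    exact (hadd hγσ hδσ).ne he
  · have hγσ : γ < σ := ((right_le_opow γ one_lt_omega0).trans_eq he).lt_of_ne hγ.2
    have hω : ω < σ := by rw [hσ, Om_succ, lt_ord]; simp
    exact (hopow hω hγσ).ne he
  · exact hμ (Om_strictMono.injective he ▸ hγ.1)
  · exact psiOf_H_ne_Om_succ hσ'.2 he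

theorem Om_lt_of_isPsiCandidate {β : Ordinal} (hI : Om (μ + 1) < I)
    (h : IsPsiCandidate (H α) (Om (μ + 1)) β) : Om μ < β := by
  obtain ⟨hβ, hmem, hsub⟩ := h
  have hsucc : μ + 1 < β :=
    hsub ⟨succ_mem_H_of_Om_succ_mem_H hI hβ.not_gt hmem, lt_Om_succ μ⟩
  exact hsub ⟨Om_mem_H (subset_H ((lt_add_one μ).trans hsucc)), Om_strictMono (lt_add_one μ)⟩

end LowerBound

theorem stmt1_general :
    ∀ μ < I, ∀ α : Ordinal,
      Om μ < psi (Om (μ + 1)) α ∧ psi (Om (μ + 1)) α < Om (μ + 1) := by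
  intro μ hμ α
  constructor
  · rcases psiOf_isPsiCandidate_or_eq (H α) (Om (μ + 1)) with hcand | heq
    · exact Om_lt_of_isPsiCandidate (Om_succ_lt_I hμ) hcand
    · rw [psi, heq]
      exact Om_strictMono (lt_add_one μ)
  · have hmem : Om (μ + 1) ∈ H α (Iio (μ + 1 + 1)) :=
      Om_mem_H (subset_H (lt_add_one (μ + 1)))
    have hlt := lt_Om_succ μ
    rw [Om_succ] at hmem hlt ⊢
    exact psi_lt_of_mem_H (isRegular_aleph_add_one μ) (by simp)
      ((isSuccLimit_ord (aleph0_le_aleph _)).add_one_lt hlt) hmem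

theorem stmt1 (hex : ∃ c : Cardinal, WeaklyInaccessible c) :
    ∀ μ < I, ∀ α : Ordinal,
      Om μ < psi (Om (μ + 1)) α ∧ psi (Om (μ + 1)) α < Om (μ + 1) :=
  stmt1_general
end
end

section
/- For all ordinals δ₀, δ₁, η: if δ₀ ≪ δ₁ {η} then ω^{δ₀} ≪ ω^{δ₁} {η}. -/
/-!
Every hull `H α X` over a lower set `X` is closed under `ω ^ e ↦ e`. Indeed, each of the
generators `0`, `I`, `Ω_γ`, `ψ_σ β` is `0` or an epsilon number, so it is `ω ^ e` only for `e`
itself; an element of `X` dominates its exponent; and a sum `γ + δ = ω ^ e` has `γ` or `δ` equal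
to `ω ^ e`, since `ω ^ e` is additively principal. A collapse `ψ_σ β < σ` is an epsilon number
because the hull it bounds is closed under `ω ^ ·` and `· + 1`. Hence `ω ^ δ₁ ∈ H_α(ψ_σ α)` gives
`δ₁ ∈ H_α(ψ_σ α)`, the hypothesis gives `δ₀`, and closure under `ω ^ ·` gives `ω ^ δ₀`.
-/

open Ordinal Set

noncomputable section

structure HClosed (α : Ordinal) (X Y : Set Ordinal) : Prop where
  subset : X ∪ {0, I} ⊆ Y
  add_mem : ∀ γ ∈ Y, ∀ δ ∈ Y, γ + δ ∈ Y
  opow_mem : ∀ γ ∈ Y, ω ^ γ ∈ Y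
  Om_mem : ∀ γ ∈ Y, Om γ ∈ Y
  psiOf_mem : ∀ σ ∈ R, ∀ β ∈ Y, β < α → σ ∈ Y → psiOf (H β) σ ∈ Y

theorem H_eq_sInter (α : Ordinal) (X : Set Ordinal) : H α X = ⋂₀ {Y | HClosed α X Y} := by
  rw [H]
  congr 1
  ext Y
  exact ⟨fun ⟨h₁, h₂, h₃, h₄, h₅⟩ => ⟨h₁, h₂, h₃, h₄, h₅⟩,
    fun ⟨h₁, h₂, h₃, h₄, h₅⟩ => ⟨h₁, h₂, h₃, h₄, h₅⟩⟩

theorem H_subset_of_hClosed {α : Ordinal} {X Y : Set Ordinal} (hY : HClosed α X Y) : H α X ⊆ Y := by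
  rw [H_eq_sInter]
  exact sInter_subset_of_mem hY

theorem hClosed_H (α : Ordinal) (X : Set Ordinal) : HClosed α X (H α X) := by
  rw [H_eq_sInter]
  exact
    { subset := fun _ hx _ hY => hY.subset hx
      add_mem := fun _ hγ _ hδ _ hY => hY.add_mem _ (hγ _ hY) _ (hδ _ hY)
      opow_mem := fun _ hγ _ hY => hY.opow_mem _ (hγ _ hY)
      Om_mem := fun _ hγ _ hY => hY.Om_mem _ (hγ _ hY)
      psiOf_mem := fun _ hσ _ hβ hβα hσ' _ hY => hY.psiOf_mem _ hσ _ (hβ _ hY) hβα (hσ' _ hY) }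

theorem zero_mem_H (α : Ordinal) (X : Set Ordinal) : 0 ∈ H α X :=
  (hClosed_H α X).subset (Or.inr (Or.inl rfl))

theorem one_mem_H (α : Ordinal) (X : Set Ordinal) : 1 ∈ H α X := by
  simpa only [opow_zero] using (hClosed_H α X).opow_mem 0 (zero_mem_H α X)

def IsZeroOrEpsilon (x : Ordinal) : Prop := x = 0 ∨ ω ^ x = x

theorem IsZeroOrEpsilon.eq_of_omega0_opow_eq {x e : Ordinal} (hx : IsZeroOrEpsilon x)
    (he : ω ^ e = x) : e = x := by
  rcases hx with rfl | hx
  · exact absurd he (opow_ne_zero e omega0_ne_zero)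
  · exact (opow_right_inj one_lt_omega0).1 (he.trans hx.symm)

theorem one_lt_of_omega0_opow_eq_self {σ : Ordinal} (hσ : ω ^ σ = σ) : 1 < σ := by
  have hσ0 : σ ≠ 0 := by
    rintro rfl
    simp at hσ
  calc 1 = ω ^ (0 : Ordinal) := (opow_zero ω).symm
    _ < ω ^ σ := (opow_lt_opow_iff_right one_lt_omega0).2 (pos_iff_ne_zero.2 hσ0)
    _ = σ := hσ

theorem omega0_opow_eq_self_of_forall_lt {b : Ordinal} (hb : b ≠ 0)
    (hsucc : ∀ γ < b, γ + 1 < b) (hopow : ∀ γ < b, ω ^ γ < b) : ω ^ b = b := by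
  have hlim : Order.IsSuccLimit b := isSuccLimit_iff.2
    ⟨hb, Order.isSuccPrelimit_of_succ_lt fun γ hγ => by
      simpa only [Order.succ_eq_add_one] using hsucc γ hγ⟩
  exact le_antisymm ((opow_le_of_isSuccLimit omega0_ne_zero hlim).2 fun γ hγ => (hopow γ hγ).le)
    (right_le_opow b one_lt_omega0)

theorem omega0_opow_ord {c : Cardinal} (hc : Cardinal.aleph0 < c) : ω ^ c.ord = c.ord := by
  have hω : ω < c.ord := by rwa [Cardinal.lt_ord, card_omega0]
  have hc0 : c.ord ≠ 0 := Cardinal.ord_eq_zero.not.2 (Cardinal.aleph0_pos.trans hc).ne'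
  exact omega0_opow_eq_self_of_forall_lt hc0
    (fun γ hγ => isPrincipal_add_ord hc.le hγ (one_lt_omega0.trans hω))
    fun γ hγ => isPrincipal_opow_ord hc.le hω hγ

theorem isZeroOrEpsilon_Om (γ : Ordinal) : IsZeroOrEpsilon (Om γ) := by
  unfold Om
  split_ifs with hγ
  · exact Or.inl rfl
  · exact Or.inr (omega0_opow_ord (Cardinal.aleph0_lt_aleph.2 (pos_iff_ne_zero.2 hγ)))

theorem isZeroOrEpsilon_I : IsZeroOrEpsilon I := by
  rcases eq_empty_or_nonempty {c : Cardinal | WeaklyInaccessible c} with hS | hS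
  · left
    rw [I, hS, Cardinal.sInf_empty, Cardinal.ord_zero]
  · exact Or.inr (omega0_opow_ord (csInf_mem hS).1)

theorem isZeroOrEpsilon_of_mem_R {σ : Ordinal} (hσ : σ ∈ R) : IsZeroOrEpsilon σ := by
  rcases hσ with ⟨μ, -, rfl⟩ | rfl
  · exact isZeroOrEpsilon_Om _
  · exact isZeroOrEpsilon_I

theorem omega0_opow_eq_self_of_collapse {Y : Set Ordinal} {b σ : Ordinal} (hσ : ω ^ σ = σ)
    (hb : b < σ) (hIio : Iio b ⊆ Y) (h0 : 0 ∈ Y) (hsucc : ∀ γ ∈ Y, γ + 1 ∈ Y)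
    (hopow : ∀ γ ∈ Y, ω ^ γ ∈ Y) (hY : Y ∩ Iio σ ⊆ Iio b) : ω ^ b = b := by
  have hσ1 := one_lt_of_omega0_opow_eq_self hσ
  have hprin : IsPrincipal (· + ·) σ := hσ ▸ isPrincipal_add_omega0_opow σ
  refine omega0_opow_eq_self_of_forall_lt (pos_iff_ne_zero.1 (hY ⟨h0, zero_lt_one.trans hσ1⟩))
    (fun γ hγ => hY ⟨hsucc γ (hIio hγ), hprin (hγ.trans hb) hσ1⟩)
    fun γ hγ => hY ⟨hopow γ (hIio hγ), ?_⟩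
  rw [← hσ]
  exact (opow_lt_opow_iff_right one_lt_omega0).2 (hγ.trans hb)

theorem isZeroOrEpsilon_psiOf_H {σ : Ordinal} (hσ : IsZeroOrEpsilon σ) (β : Ordinal) :
    IsZeroOrEpsilon (psiOf (H β) σ) := by
  have hmem : psiOf (H β) σ ∈
      {b | b < σ ∧ σ ∈ H β (Iio b) ∧ H β (Iio b) ∩ Iio σ ⊆ Iio b} ∪ {σ} :=
    csInf_mem ⟨σ, Or.inr rfl⟩
  rcases hmem with ⟨hb, -, hY⟩ | hψ
  · rcases hσ with rfl | hσ
    · exact (not_lt_zero hb).elim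
    · exact Or.inr <| omega0_opow_eq_self_of_collapse hσ hb
        (fun γ hγ => (hClosed_H β _).subset (Or.inl hγ)) (zero_mem_H β _)
        (fun γ hγ => (hClosed_H β _).add_mem γ hγ 1 (one_mem_H β _))
        (hClosed_H β _).opow_mem hY
  · rwa [mem_singleton_iff.1 hψ]

theorem eq_or_eq_of_add_eq_omega0_opow {γ δ e : Ordinal} (h : γ + δ = ω ^ e) :
    γ = ω ^ e ∨ δ = ω ^ e := by
  by_contra! hne
  have hγ : γ < ω ^ e := lt_of_le_of_ne (h ▸ le_self_add) hne.1
  have hδ : δ < ω ^ e := lt_of_le_of_ne (h ▸ le_add_self) hne.2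
  exact (isPrincipal_add_omega0_opow e hγ hδ).ne h

theorem mem_H_of_omega0_opow_mem {α : Ordinal} {X : Set Ordinal} (hX : IsLowerSet X)
    {e : Ordinal} (he : ω ^ e ∈ H α X) : e ∈ H α X := by
  have G := hClosed_H α X
  set S : Set Ordinal := {γ | γ ∈ H α X ∧ ∀ e, ω ^ e = γ → e ∈ H α X}
  have hgen : ∀ {x}, x ∈ H α X → IsZeroOrEpsilon x → x ∈ S := fun hx hε =>
    ⟨hx, fun e he => hε.eq_of_omega0_opow_eq he ▸ hx⟩
  have hS : HClosed α X S :=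
    { subset := by
        rintro x (hx | rfl | rfl)
        · exact ⟨G.subset (Or.inl hx), fun e he =>
            G.subset (Or.inl (hX ((right_le_opow e one_lt_omega0).trans he.le) hx))⟩
        · exact hgen (zero_mem_H α X) (Or.inl rfl)
        · exact hgen (G.subset (Or.inr (Or.inr rfl))) isZeroOrEpsilon_I
      add_mem := by
        rintro γ ⟨hγ, hγlog⟩ δ ⟨hδ, hδlog⟩
        refine ⟨G.add_mem γ hγ δ hδ, fun e he => ?_⟩
        rcases eq_or_eq_of_add_eq_omega0_opow he.symm with h | h
        · exact hγlog e h.symm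
        · exact hδlog e h.symm
      opow_mem := fun γ ⟨hγ, _⟩ =>
        ⟨G.opow_mem γ hγ, fun e he => (opow_right_inj one_lt_omega0).1 he ▸ hγ⟩
      Om_mem := fun γ ⟨hγ, _⟩ => hgen (G.Om_mem γ hγ) (isZeroOrEpsilon_Om γ)
      psiOf_mem := fun σ hσR β ⟨hβ, _⟩ hβα ⟨hσ, _⟩ =>
        hgen (G.psiOf_mem σ hσR β hβ hβα hσ)
          (isZeroOrEpsilon_psiOf_H (isZeroOrEpsilon_of_mem_R hσR) β) }
  exact (H_subset_of_hClosed hS he).2 e rfl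

theorem stmt11_general (δ₀ δ₁ η : Ordinal) (h : llr η δ₀ δ₁) :
    llr η (Ordinal.omega0 ^ δ₀) (Ordinal.omega0 ^ δ₁) := by
  obtain ⟨hlt, hcl⟩ := h
  refine ⟨(opow_lt_opow_iff_right one_lt_omega0).2 hlt, fun σ hσ α h₁ hη => ?_⟩
  have hδ₁ := mem_H_of_omega0_opow_mem (isLowerSet_Iio _) h₁
  exact (hClosed_H α _).opow_mem δ₀ (hcl σ hσ α hδ₁ hη)

theorem stmt11 (hex : ∃ c : Cardinal, WeaklyInaccessible c)
    (δ₀ δ₁ η : Ordinal) (h : llr η δ₀ δ₁) :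
    llr η (Ordinal.omega0 ^ δ₀) (Ordinal.omega0 ^ δ₁) :=
  stmt11_general δ₀ δ₁ η h

end
end
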